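/- arXiv:math/0701197 — 5 statements merged into one kernel-verified Lean document; each statement's English description precedes it below -/
import Mathlib

section
/- The function g : ℓ¹(ℕ, ℂ) → ℂ defined by g(x) = Σ_{k=1}^∞ 2^k (x_k)^{2k} is well-defined (the series converges absolutely) for every x ∈ ℓ¹, and g is continuous. -/
/-- `g(x) = ∑_{k=1}^∞ 2^k x_k^{2k}` on `ℓ¹(ℕ, ℂ)` (index `k ∈ {1,2,...}`
realized as `k+1` for `k : ℕ`). -/
noncomputable def gFun (x : lp (fun _ : ℕ => ℂ) 1) : ℂ :=
  ∑' k : ℕ, (2 : ℂ) ^ (k + 1) * ((x : ℕ → ℂ) k) ^ (2 * (k + 1))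

/-! The `k`-th term has modulus `(2 |x_k|²)^k`. On the ball of radius
`1/4` around `x₀` every coordinate satisfies `|x_k| ≤ |x₀_k| + 1/4`, and `x₀_k → 0`, so
the terms are eventually bounded by `(2 (1/2)²)^k = 2^{-k}` uniformly on that ball. The
Weierstrass M-test then gives summability and local uniform convergence, hence continuity. -/

open Filter Topology

theorem norm_two_pow_mul_pow_two_mul (z : ℂ) (k : ℕ) :
    ‖(2 : ℂ) ^ (k + 1) * z ^ (2 * (k + 1))‖ = (2 * ‖z‖ ^ 2) ^ (k + 1) := by
  rw [norm_mul, norm_pow, norm_pow, Complex.norm_ofNat, pow_mul, mul_pow]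

theorem lp.tendsto_norm_cofinite_zero {α : Type*} {E : α → Type*}
    [∀ i, NormedAddCommGroup (E i)] {p : ENNReal} (hp₀ : p ≠ 0) (hp : p ≠ ⊤) (f : lp E p) :
    Tendsto (fun i => ‖f i‖) cofinite (𝓝 0) := by
  have hq : 0 < p.toReal := ENNReal.toReal_pos hp₀ hp
  have hpow := ((lp.memℓp f).summable hq).tendsto_cofinite_zero.rpow_const
    (p := p.toReal⁻¹) (Or.inr (inv_nonneg.2 hq.le))
  rw [Real.zero_rpow (inv_ne_zero hq.ne')] at hpow
  refine hpow.congr fun i => ?_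
  rw [Real.rpow_rpow_inv (norm_nonneg _) hq.ne']

theorem summable_pow_succ_of_eventually_le {r : ℕ → ℝ} {c : ℝ} (hr : ∀ k, 0 ≤ r k)
    (hc : c < 1) (h : ∀ᶠ k in cofinite, r k ≤ c) : Summable fun k => r k ^ (k + 1) := by
  obtain ⟨k₀, hk₀⟩ := h.exists
  have hgeo : Summable fun k : ℕ => c ^ (k + 1) :=
    (summable_geometric_of_lt_one ((hr k₀).trans hk₀) hc).mul_left c |>.congr
      fun k => (pow_succ' c k).symm
  refine hgeo.of_norm_bounded_eventually (h.mono fun k hk => ?_)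
  rw [Real.norm_of_nonneg (pow_nonneg (hr k) _)]
  exact pow_le_pow_left₀ (hr k) hk _

section Majorant

variable {p : ENNReal} [Fact (1 ≤ p)]

theorem summable_two_mul_norm_add_sq_pow (hp : p ≠ ⊤) (x₀ : lp (fun _ : ℕ => ℂ) p) :
    Summable fun k => (2 * (‖x₀ k‖ + 4⁻¹) ^ 2) ^ (k + 1) := by
  have hp₀ : p ≠ 0 := (zero_lt_one.trans_le Fact.out).ne'
  refine summable_pow_succ_of_eventually_le (c := 2⁻¹) (fun k => by positivity) (by norm_num) ?_
  filter_upwards [(lp.tendsto_norm_cofinite_zero hp₀ hp x₀).eventually_le_const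
    (by norm_num : (0 : ℝ) < 4⁻¹)] with k hk
  have hsum : ‖x₀ k‖ + 4⁻¹ ≤ 2⁻¹ := by linarith
  calc 2 * (‖x₀ k‖ + 4⁻¹) ^ 2 ≤ 2 * (2⁻¹) ^ 2 := by gcongr
    _ = 2⁻¹ := by norm_num

theorem norm_two_pow_mul_pow_le {x₀ x : lp (fun _ : ℕ => ℂ) p} (hx : dist x x₀ ≤ 4⁻¹)
    (k : ℕ) :
    ‖(2 : ℂ) ^ (k + 1) * x k ^ (2 * (k + 1))‖ ≤ (2 * (‖x₀ k‖ + 4⁻¹) ^ 2) ^ (k + 1) := by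
  have hcoord : ‖x k‖ ≤ ‖x₀ k‖ + 4⁻¹ := by
    have := (lp.lipschitzWith_one_eval p k).dist_le_mul x x₀
    rw [NNReal.coe_one, one_mul, dist_eq_norm] at this
    linarith [norm_le_norm_add_norm_sub' (x k) (x₀ k)]
  rw [norm_two_pow_mul_pow_two_mul]
  gcongr

end Majorant

theorem gFun_summable_and_continuous :
    (∀ x : lp (fun _ : ℕ => ℂ) 1,
      Summable fun k : ℕ => ‖(2 : ℂ) ^ (k + 1) * ((x : ℕ → ℂ) k) ^ (2 * (k + 1))‖) ∧
    Continuous gFun := by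
  refine ⟨fun x => ?_, continuous_iff_continuousAt.2 fun x₀ => ?_⟩
  · exact (summable_two_mul_norm_add_sq_pow ENNReal.one_ne_top x).of_nonneg_of_le
      (fun _ => norm_nonneg _) (norm_two_pow_mul_pow_le (by simp))
  · have hcont : ContinuousOn gFun (Metric.ball x₀ 4⁻¹) :=
      continuousOn_tsum
        (fun k => (((lp.lipschitzWith_one_eval 1 k).continuous.pow _).const_mul _).continuousOn)
        (summable_two_mul_norm_add_sq_pow ENNReal.one_ne_top x₀)
        fun k _ hx => norm_two_pow_mul_pow_le (Metric.mem_ball.1 hx).le k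
    exact hcont.continuousAt (Metric.ball_mem_nhds _ (by norm_num))
end

section
/- The function g : ℓ¹(ℕ, ℂ) → ℂ, g(x) = Σ_{k=1}^∞ 2^k (x_k)^{2k}, is unbounded on the closed ball of radius 2 around every point x ∈ ℓ¹: for every x ∈ ℓ¹ and every N > 0 there exists y ∈ ℓ¹ with ‖y − x‖₁ ≤ 2 and |g(y)| ≥ N. -/
open Filter Topology

theorem summable_pow_succ_of_tendsto_zero {R : Type*} [NormedRing R] [CompleteSpace R]
    {a : ℕ → R} (ha : Tendsto a atTop (𝓝 0)) : Summable fun k => a k ^ (k + 1) := by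
  have hsmall : ∀ᶠ k in atTop, ‖a k‖ ≤ 1 / 2 :=
    (tendsto_zero_iff_norm_tendsto_zero.mp ha).eventually_le_const (by norm_num)
  refine Summable.of_norm_bounded_eventually_nat
    ((summable_nat_add_iff 1).mpr summable_geometric_two) ?_
  filter_upwards [hsmall] with k hk
  calc ‖a k ^ (k + 1)‖ ≤ ‖a k‖ ^ (k + 1) := norm_pow_le' _ k.succ_pos
    _ ≤ (1 / 2) ^ (k + 1) := by gcongr

theorem lp.tendsto_coeFn_zero {E : Type*} [NormedAddCommGroup E] (x : lp (fun _ : ℕ => E) 1) :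
    Tendsto (x : ℕ → E) atTop (𝓝 0) := by
  have hsum : Summable fun k => ‖(x : ℕ → E) k‖ := by
    simpa using (lp.memℓp x).summable (p := 1) (by norm_num)
  exact tendsto_zero_iff_norm_tendsto_zero.mpr hsum.tendsto_atTop_zero

theorem summable_gFun_terms (x : lp (fun _ : ℕ => ℂ) 1) :
    Summable fun k : ℕ => (2 : ℂ) ^ (k + 1) * ((x : ℕ → ℂ) k) ^ (2 * (k + 1)) := by
  have h2x : Tendsto (fun k => 2 * (x : ℕ → ℂ) k ^ 2) atTop (𝓝 0) := by
    simpa using ((lp.tendsto_coeFn_zero x).pow 2).const_mul 2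
  exact (summable_pow_succ_of_tendsto_zero h2x).congr fun k => by rw [mul_pow, ← pow_mul]

theorem gFun_add_single_sub (x : lp (fun _ : ℕ => ℂ) 1) (n : ℕ) (c : ℂ) :
    gFun (x + lp.single 1 n c) - gFun x =
      2 ^ (n + 1) * (((x : ℕ → ℂ) n + c) ^ (2 * (n + 1)) - (x : ℕ → ℂ) n ^ (2 * (n + 1))) := by
  rw [gFun, gFun, ← (summable_gFun_terms _).tsum_sub (summable_gFun_terms x), tsum_eq_single n]
  · simp [lp.single_apply, mul_sub]
  · intro k hk
    simp [lp.single_apply, hk]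

theorem half_le_norm_one_sub_pow {R : Type*} [NormedRing R] [NormOneClass R] {z : R}
    (hz : ‖z‖ ≤ 1 / 2) {m : ℕ} (hm : m ≠ 0) : 1 / 2 ≤ ‖1 - z ^ m‖ :=
  calc (1 : ℝ) / 2 ≤ 1 - ‖z‖ := by linarith
    _ ≤ 1 - ‖z‖ ^ m := by gcongr; exact pow_le_of_le_one (norm_nonneg z) (by linarith) hm
    _ ≤ 1 - ‖z ^ m‖ := by gcongr; exact norm_pow_le' z (Nat.pos_of_ne_zero hm)
    _ ≤ ‖1 - z ^ m‖ := by simpa using norm_sub_norm_le (1 : R) (z ^ m)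

theorem gFun_unbounded_on_balls_general (x : lp (fun _ : ℕ => ℂ) 1) (N : ℝ) :
    ∃ y : lp (fun _ : ℕ => ℂ) 1, ‖y - x‖ ≤ 2 ∧ N ≤ ‖gFun y‖ := by
  have hsmall : ∀ᶠ n in atTop, ‖(x : ℕ → ℂ) n‖ ≤ 1 / 2 :=
    (tendsto_zero_iff_norm_tendsto_zero.mp (lp.tendsto_coeFn_zero x)).eventually_le_const
      (by norm_num)
  have hlarge : ∀ᶠ n : ℕ in atTop, N + ‖gFun x‖ ≤ 2 ^ n :=
    (tendsto_pow_atTop_atTop_of_one_lt one_lt_two).eventually_ge_atTop _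
  obtain ⟨n, hxn, hn⟩ := (hsmall.and hlarge).exists
  set y := x + lp.single 1 n (1 - (x : ℕ → ℂ) n)
  refine ⟨y, ?_, ?_⟩
  · rw [add_sub_cancel_left, lp.norm_single (by norm_num)]
    calc ‖1 - (x : ℕ → ℂ) n‖ ≤ ‖(1 : ℂ)‖ + ‖(x : ℕ → ℂ) n‖ := norm_sub_le _ _
      _ ≤ 2 := by rw [norm_one]; linarith
  · have hjump : (2 : ℝ) ^ n ≤ ‖gFun y - gFun x‖ := by
      rw [gFun_add_single_sub, add_sub_cancel, one_pow, norm_mul, norm_pow, Complex.norm_two]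
      have := half_le_norm_one_sub_pow hxn (m := 2 * (n + 1)) (by omega)
      calc (2 : ℝ) ^ n = 2 ^ (n + 1) * (1 / 2) := by ring
        _ ≤ _ := by gcongr
    linarith [norm_sub_le (gFun y) (gFun x)]

theorem gFun_unbounded_on_balls (x : lp (fun _ : ℕ => ℂ) 1) (N : ℝ) (hN : 0 < N) :
    ∃ y : lp (fun _ : ℕ => ℂ) 1, ‖y - x‖ ≤ 2 ∧ N ≤ ‖gFun y‖ :=
  gFun_unbounded_on_balls_general x N
end

section
/- Define f : ℓ¹(ℕ, ℂ) → ℂ^ℕ by f(x) = (g(nx))_{n∈ℕ}, where g(x) = Σ_{k=1}^∞ 2^k (x_k)^{2k}. Then f is unbounded on every non-empty open subset of ℓ¹: for every non-empty open U ⊆ ℓ¹, the image f(U) is not a bounded subset of the product space ℂ^ℕ. -/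
/-- `f : ℓ¹ → ℂ^ℕ`, `f(x) = (g(nx))_{n ∈ {1,2,...}}`. -/
noncomputable def fFun (x : lp (fun _ : ℕ => ℂ) 1) : ℕ → ℂ :=
  fun n => gFun (((n : ℂ) + 1) • x)

/-!
Every ball of radius `2` in `ℓ¹` around `z` contains the points `(z_0, …, z_{N-1}, 0, 0, …) + e_m`
for a suitable `N` and every `m ≥ N` (`e_m` the `m`-th unit vector), and `g` takes the value
`c_N + 2^(m+1)` there; so `g` is unbounded on every such ball. Since `x ↦ (n+1) x` maps a ball of
radius `ε` onto one of radius `(n+1) ε`, the coordinate `f(·)_n` is unbounded on every ball of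
radius `ε > 2 / (n+1)`.
-/

open Metric
open scoped Pointwise

lemma lp.exists_dist_sum_range_single_le {E : ℕ → Type*} [∀ i, NormedAddCommGroup (E i)]
    {p : ENNReal} [Fact (1 ≤ p)] (hp : p ≠ ⊤) (f : lp E p) {r : ℝ} (hr : 0 < r) :
    ∃ N, dist (∑ i ∈ Finset.range N, lp.single p i (f i)) f ≤ r :=
  ((lp.hasSum_single hp f).tendsto_sum_nat.eventually (closedBall_mem_nhds f hr)).exists

lemma gFun_eq_sum_of_eq_zero {x : lp (fun _ : ℕ => ℂ) 1} (s : Finset ℕ)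
    (hx : ∀ k ∉ s, x k = 0) :
    gFun x = ∑ k ∈ s, (2 : ℂ) ^ (k + 1) * x k ^ (2 * (k + 1)) :=
  tsum_eq_sum fun k hk => by simp [hx k hk]

lemma gFun_sum_range_single_add_single (a : ℕ → ℂ) {N m : ℕ} (hNm : N ≤ m) :
    gFun ((∑ i ∈ Finset.range N, lp.single 1 i (a i)) + lp.single 1 m 1) =
      2 ^ (m + 1) + ∑ k ∈ Finset.range N, (2 : ℂ) ^ (k + 1) * a k ^ (2 * (k + 1)) := by
  set y : lp (fun _ : ℕ => ℂ) 1 := (∑ i ∈ Finset.range N, lp.single 1 i (a i)) + lp.single 1 m 1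
  have hy : ∀ i, y i = (if i < N then a i else 0) + if i = m then 1 else 0 := by
    intro i
    simp only [y, lp.coeFn_add, lp.coeFn_sum, lp.coeFn_single, Finset.sum_apply,
      Finset.sum_ite_eq, Pi.add_apply, Pi.single_apply, Finset.mem_range]
  rw [gFun_eq_sum_of_eq_zero (insert m (Finset.range N)), Finset.sum_insert (by simpa using hNm)]
  · rw [hy m]
    simp only [if_neg (not_lt.2 hNm), zero_add, ↓reduceIte, one_pow, mul_one]
    refine congrArg (_ + ·) (Finset.sum_congr rfl fun i hi => ?_)
    have hi : i < N := Finset.mem_range.1 hi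
    rw [hy i, if_pos hi, if_neg (hi.trans_le hNm).ne, add_zero]
  · intro i hi
    simp only [Finset.mem_insert, Finset.mem_range, not_or, not_lt] at hi
    rw [hy i, if_neg (not_lt.2 hi.2), if_neg hi.1, add_zero]

lemma gFun_unbounded_on_closedBall (z : lp (fun _ : ℕ => ℂ) 1) (C : ℝ) :
    ∃ y ∈ closedBall z 2, C < ‖gFun y‖ := by
  obtain ⟨N, hN⟩ := lp.exists_dist_sum_range_single_le ENNReal.one_ne_top z one_pos
  set w := ∑ i ∈ Finset.range N, lp.single 1 i (z i)
  set S := ∑ k ∈ Finset.range N, (2 : ℂ) ^ (k + 1) * z k ^ (2 * (k + 1))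
  obtain ⟨k, hk⟩ := pow_unbounded_of_one_lt (C + ‖S‖) one_lt_two
  set m := max N k
  set e := lp.single (E := fun _ : ℕ => ℂ) 1 m 1
  refine ⟨w + e, ?_, ?_⟩
  · calc dist (w + e) z = ‖(w - z) + e‖ := by rw [dist_eq_norm, add_sub_right_comm]
      _ ≤ ‖w - z‖ + ‖e‖ := norm_add_le _ _
      _ ≤ 1 + 1 := by
        gcongr
        · rwa [← dist_eq_norm]
        · simp [e, lp.norm_single]
      _ = 2 := one_add_one_eq_two
  have h2m : (2 : ℝ) ^ k ≤ ‖(2 : ℂ) ^ (m + 1)‖ := by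
    rw [norm_pow, Complex.norm_two]
    exact pow_le_pow_right₀ one_le_two (by omega)
  have h := norm_sub_norm_le ((2 : ℂ) ^ (m + 1)) (-S)
  rw [sub_neg_eq_add, norm_neg] at h
  rw [gFun_sum_range_single_add_single _ (le_max_left N k)]
  linarith

theorem fFun_unbounded_on_open_sets (U : Set (lp (fun _ : ℕ => ℂ) 1))
    (hU : IsOpen U) (hne : U.Nonempty) :
    ¬ Bornology.IsVonNBounded ℂ (fFun '' U) := by
  intro hB
  obtain ⟨x₀, hx₀⟩ := hne
  obtain ⟨ε, hε, hball⟩ := isOpen_iff.1 hU x₀ hx₀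
  obtain ⟨n, hn⟩ := exists_nat_gt (2 / ε)
  set c : ℂ := (n : ℂ) + 1
  have hc : ‖c‖ = n + 1 := by
    simpa [c] using Complex.norm_of_nonneg (by positivity : (0 : ℝ) ≤ n + 1)
  have h2 : 2 < ‖c‖ * ε := by
    rw [hc, ← div_lt_iff₀ hε]; linarith
  obtain ⟨C, hC⟩ := (NormedSpace.image_isVonNBounded_iff ℂ).1 <| by
    simpa only [Set.image_image] using Bornology.isVonNBounded_pi_iff.1 hB n
  obtain ⟨y, hy, hCy⟩ := gFun_unbounded_on_closedBall (c • x₀) C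
  have hyc : y ∈ c • ball x₀ ε := by
    rw [_root_.smul_ball (by rw [← norm_ne_zero_iff, hc]; positivity)]
    exact closedBall_subset_ball h2 hy
  obtain ⟨x, hx, rfl⟩ := hyc
  exact (hC x (hball hx)).not_gt hCy
end

section
/- Let U ⊆ ℂ be open non-empty and E₀ = span_ℂ{(z^n)_{n∈ℕ} : z ∈ e^U} ⊆ ℂ^ℕ with the topology induced by the product ℂ^ℕ. Then the map f₀ : U → E₀, f₀(z) = (e^{nz})_{n∈ℕ}, is continuous but not complex differentiable as a map into E₀: for z ∈ U, the candidate derivative (n e^{nz})_{n∈ℕ} does not belong to E₀. -/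
open Filter Polynomial Topology

/-!
Since `e^{(n+1)z} = (e^z)^{n+1}`, `E₀` lies in the span of the geometric sequences
`(v^{n+1})ₙ`, and any limit of the difference quotients in the product topology is, coordinate
by coordinate, the sequence of derivatives `((n+1) e^{(n+1)z})ₙ = ((n+1) w^{n+1})ₙ`, `w = e^z`.
That sequence is not a finite combination of geometric sequences `(v^{n+1})ₙ`, `v ∈ V`: pairing a
sequence `s` with the coefficients of a polynomial `P` (`s ↦ ∑ₖ Pₖ sₖ`) sends `(v^{n+1})ₙ` to
`(XP)(v)` and `((n+1) w^{n+1})ₙ` to `w (XP)'(w)`, and `P = (X - w) ∏_{v ∈ V \ {w}} (X - v)`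
kills every `(v^{n+1})ₙ` while `w (XP)'(w) = w² ∏_{v ∈ V \ {w}} (w - v) ≠ 0`.
-/

section CoeffPairing

variable {R : Type*} [CommSemiring R]

noncomputable def coeffPairing (P : R[X]) : (ℕ → R) →ₗ[R] R :=
  P.sum fun k a => a • LinearMap.proj k

theorem coeffPairing_apply (P : R[X]) (s : ℕ → R) :
    coeffPairing P s = P.sum fun k a => a * s k := by
  simp [coeffPairing, Polynomial.sum, LinearMap.sum_apply]

theorem coeffPairing_geom (P : R[X]) (v : R) :
    coeffPairing P (fun n => v ^ (n + 1)) = (X * P).eval v := by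
  rw [coeffPairing_apply, mul_comm, eval_mul_X, eval_eq_sum, Polynomial.sum, Polynomial.sum,
    Finset.sum_mul]
  exact Finset.sum_congr rfl fun k _ => by ring

theorem coeffPairing_nat_succ_mul_geom (P : R[X]) (w : R) :
    coeffPairing P (fun n => ((n : R) + 1) * w ^ (n + 1)) =
      w * (derivative (X * P)).eval w := by
  rw [coeffPairing_apply]
  induction P using Polynomial.induction_on' with
  | add p q hp hq =>
    rw [Polynomial.sum_add_index p q _ (fun k => by ring) (fun k b c => by ring), hp, hq,
      mul_add, derivative_add, eval_add, mul_add]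
  | monomial n a =>
    rw [Polynomial.sum_monomial_index _ _ (by simp), X_mul_monomial, derivative_monomial]
    simp only [pow_succ, add_tsub_cancel_right, Nat.cast_add, Nat.cast_one, eval_monomial]
    ring

end CoeffPairing

theorem nat_succ_mul_geom_notMem_span_geom {K : Type*} [Field K] {w : K} (hw : w ≠ 0) :
    (fun n : ℕ => ((n : K) + 1) * w ^ (n + 1)) ∉
      Submodule.span K (Set.range fun (v : K) (n : ℕ) => v ^ (n + 1)) := by
  classical
  intro hmem
  obtain ⟨c, hc⟩ := Finsupp.mem_span_range_iff_exists_finsupp.1 hmem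
  set Q : K[X] := ∏ v ∈ c.support.erase w, (X - C v)
  set P : K[X] := (X - C w) * Q
  have hQw : Q.eval w ≠ 0 := by
    simp only [Q, eval_prod, eval_sub, eval_X, eval_C]
    exact Finset.prod_ne_zero_iff.2 fun v hv =>
      sub_ne_zero.2 (Ne.symm (Finset.mem_erase.1 hv).1)
  have hroot : ∀ v ∈ c.support, (X * P).eval v = 0 := by
    intro v hv
    by_cases hvw : v = w
    · simp [P, hvw]
    · simp only [P, Q, eval_mul, eval_prod]
      rw [Finset.prod_eq_zero (Finset.mem_erase.2 ⟨hvw, hv⟩) (by simp), mul_zero, mul_zero]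
  have hderiv : (derivative (X * P)).eval w = w * Q.eval w := by
    simp [P, derivative_mul]
  have hpair := congrArg (coeffPairing P) hc
  rw [map_finsuppSum, Finsupp.sum, Finset.sum_eq_zero fun v hv => by
      rw [map_smul, coeffPairing_geom, hroot v hv, smul_zero],
    coeffPairing_nat_succ_mul_geom, hderiv] at hpair
  exact hQw (by simpa [hw] using hpair.symm)

theorem eq_of_tendsto_slope_pi {𝕜 F ι : Type*} [NontriviallyNormedField 𝕜] [NormedAddCommGroup F]
    [NormedSpace 𝕜 F] {f : ι → 𝕜 → F} {f' L : ι → F} {z : 𝕜}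
    (hf : ∀ i, HasDerivAt (f i) (f' i) z)
    (hL : Tendsto (fun w => (w - z)⁻¹ • ((fun i => f i w) - fun i => f i z)) (𝓝[≠] z) (𝓝 L)) :
    L = f' :=
  funext fun i => tendsto_nhds_unique (tendsto_pi_nhds.1 hL i) (hf i).tendsto_slope

theorem Complex.exp_nat_succ_mul (n : ℕ) (z : ℂ) :
    Complex.exp (((n : ℂ) + 1) * z) = Complex.exp z ^ (n + 1) := by
  rw [← Complex.exp_nat_mul]
  push_cast
  rfl

theorem f0_continuous_not_differentiable_general (U : Set ℂ) (hU : IsOpen U)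
    (E₀ : Submodule ℂ (ℕ → ℂ))
    (hE₀ : E₀ = Submodule.span ℂ
      {s : ℕ → ℂ | ∃ z ∈ U, s = fun n : ℕ => Complex.exp (((n : ℂ) + 1) * z)}) :
    (∀ z ∈ U, (fun n : ℕ => Complex.exp (((n : ℂ) + 1) * z)) ∈ E₀) ∧
    ContinuousOn (fun z : ℂ => (fun n : ℕ => Complex.exp (((n : ℂ) + 1) * z))) U ∧
    ∀ z ∈ U,
      (fun n : ℕ => ((n : ℂ) + 1) * Complex.exp (((n : ℂ) + 1) * z)) ∉ E₀ ∧
      ¬ ∃ L ∈ E₀, Tendsto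
        (fun w : ℂ => (w - z)⁻¹ •
          ((fun n : ℕ => Complex.exp (((n : ℂ) + 1) * w))
            - fun n : ℕ => Complex.exp (((n : ℂ) + 1) * z)))
        (nhdsWithin z (U \ {z})) (nhds L) := by
  refine ⟨fun z hz => hE₀ ▸ Submodule.subset_span ⟨z, hz, rfl⟩, by fun_prop, fun z hz => ?_⟩
  have hE₀_le : E₀ ≤ Submodule.span ℂ (Set.range fun (v : ℂ) (n : ℕ) => v ^ (n + 1)) := by
    rw [hE₀]
    refine Submodule.span_mono ?_
    rintro _ ⟨z', -, rfl⟩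
    exact ⟨Complex.exp z', funext fun n => (Complex.exp_nat_succ_mul n z').symm⟩
  have hnotMem : (fun n : ℕ => ((n : ℂ) + 1) * Complex.exp (((n : ℂ) + 1) * z)) ∉ E₀ := by
    simp only [Complex.exp_nat_succ_mul]
    exact fun h => nat_succ_mul_geom_notMem_span_geom (Complex.exp_ne_zero z) (hE₀_le h)
  refine ⟨hnotMem, ?_⟩
  rintro ⟨L, hL, hslope⟩
  rw [Set.sdiff_eq, nhdsWithin_inter_of_mem (mem_nhdsWithin_of_mem_nhds (hU.mem_nhds hz))]
    at hslope
  have hL_eq : L = fun n : ℕ => ((n : ℂ) + 1) * Complex.exp (((n : ℂ) + 1) * z) :=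
    eq_of_tendsto_slope_pi (fun n => by
      simpa [mul_comm] using ((hasDerivAt_id z).const_mul ((n : ℂ) + 1)).cexp) hslope
  exact hnotMem (hL_eq ▸ hL)

/-- Let `U ⊆ ℂ` be open and non-empty, and let `E₀ ⊆ ℂ^ℕ` be the span of the
geometric sequences `(e^{nz})_{n≥1}` for `z ∈ U` (i.e. of `(wⁿ)ₙ` for `w ∈ e^U`),
with the topology induced by the product `ℂ^ℕ`. Then `f₀(z) = (e^{nz})ₙ` takes
values in `E₀` and is continuous on `U`, but at no point `z ∈ U` is it complex
differentiable as a map into `E₀`: the candidate derivative `(n e^{nz})ₙ` is not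
in `E₀`, and the difference quotients have no limit in `E₀` (equivalently, since
`E₀` carries the induced topology, no limit `L ∈ E₀` in the ambient product). -/
theorem f0_continuous_not_differentiable (U : Set ℂ) (hU : IsOpen U)
    (hne : U.Nonempty) (E₀ : Submodule ℂ (ℕ → ℂ))
    (hE₀ : E₀ = Submodule.span ℂ
      {s : ℕ → ℂ | ∃ z ∈ U, s = fun n : ℕ => Complex.exp (((n : ℂ) + 1) * z)}) :
    (∀ z ∈ U, (fun n : ℕ => Complex.exp (((n : ℂ) + 1) * z)) ∈ E₀) ∧
    ContinuousOn (fun z : ℂ => (fun n : ℕ => Complex.exp (((n : ℂ) + 1) * z))) U ∧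
    ∀ z ∈ U,
      (fun n : ℕ => ((n : ℂ) + 1) * Complex.exp (((n : ℂ) + 1) * z)) ∉ E₀ ∧
      ¬ ∃ L ∈ E₀, Tendsto
        (fun w : ℂ => (w - z)⁻¹ •
          ((fun n : ℕ => Complex.exp (((n : ℂ) + 1) * w))
            - fun n : ℕ => Complex.exp (((n : ℂ) + 1) * z)))
        (nhdsWithin z (U \ {z})) (nhds L) :=
  f0_continuous_not_differentiable_general U hU E₀ hE₀
end

section
/- Let k ∈ ℕ, U ⊆ ℂ open non-empty, and E_k = span_ℂ{ (n^j z^n)_{n∈ℕ} : z ∈ e^U, 0 ≤ j ≤ k } ⊆ ℂ^ℕ with the product-induced topology. Then the map f_k : U → E_k, f_k(z) = (e^{nz})_{n∈ℕ}, is k times continuously complex differentiable with f_k^{(j)}(z) = (n^j e^{nz})_{n∈ℕ} for j ≤ k, but f_k is not (k+1) times complex differentiable, since (n^{k+1} e^{nz})_{n∈ℕ} ∉ E_k. -/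
/-!
Coordinatewise, `Fder j` is the `j`-th derivative of `z ↦ e^{(n+1)z}`, so all the positive claims
hold in the product topology. For the negative one, let `S` be the left shift of sequences. On
`n ↦ p(n) w^{n+1}` the operator `S - w` acts as `w` times the forward difference of `p`, so
`h_{j,w}` lies in the generalized `w`-eigenspace of `S` of order `j + 1` but not of order `j`.
Generalized eigenspaces for distinct eigenvalues are independent, hence `h_{k+1,w}` is not in the
span of the `h_{j,v}` with `j ≤ k`. Since `E_k` carries the induced topology, a limit in `E_k` of
the difference quotients of `Fder k` would be their limit `h_{k+1,e^z}` in `ℂ^ℕ`.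
-/

open Filter

/-- The `j`-th derivative candidate: `F j z = (n^j e^{nz})_{n≥1}`. -/
noncomputable def Fder (j : ℕ) (z : ℂ) : ℕ → ℂ :=
  fun n => ((n : ℂ) + 1) ^ j * Complex.exp (((n : ℂ) + 1) * z)

open Topology fwdDiff

lemma fwdDiff_iter_comp_of_map_add {M M' G : Type*} [AddCommMonoid M] [AddCommMonoid M']
    [AddCommGroup G] {h : M} {h' : M'} {φ : M → M'} (hφ : ∀ x, φ (x + h) = φ x + h')
    (f : M' → G) (m : ℕ) : (Δ_[h])^[m] (f ∘ φ) = (Δ_[h'])^[m] f ∘ φ := by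
  induction m generalizing f with
  | zero => rfl
  | succ m ih =>
    rw [Function.iterate_succ_apply, Function.iterate_succ_apply, ← ih]
    congr 1
    funext x
    simp [fwdDiff, hφ]

namespace Module.End

lemma notMem_span_of_genEigenspace {R M : Type*} [CommRing R] [IsDomain R] [AddCommGroup M]
    [Module R M] [IsTorsionFree R M] (f : End R M) {μ : R} {k : ℕ} {s : Set M} {v : M}
    (hs : ∀ x ∈ s, x ∈ f.genEigenspace μ k ∨ ∃ ν ≠ μ, x ∈ f.maxGenEigenspace ν)
    (hv : v ∈ f.maxGenEigenspace μ) (hvk : v ∉ f.genEigenspace μ k) :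
    v ∉ Submodule.span R s := by
  set Q := ⨆ ν, ⨆ (_ : ν ≠ μ), f.maxGenEigenspace ν
  intro hspan
  have hsQ : Submodule.span R s ≤ f.genEigenspace μ k ⊔ Q := by
    rw [Submodule.span_le]
    rintro x hx
    rcases hs x hx with hμ | ⟨ν, hν, hx⟩
    · exact Submodule.mem_sup_left hμ
    · exact Submodule.mem_sup_right <|
        Submodule.mem_iSup_of_mem ν (Submodule.mem_iSup_of_mem hν hx)
  obtain ⟨p, hp, q, hq, rfl⟩ := Submodule.mem_sup.mp (hsQ hspan)
  have hq_max : q ∈ f.maxGenEigenspace μ := by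
    simpa using Submodule.sub_mem _ hv (f.genEigenspace_le_maximal μ k hp)
  have hq0 : q = 0 := Submodule.disjoint_def.mp (f.independent_genEigenspace ⊤ μ) q hq_max hq
  exact hvk (by rwa [hq0, add_zero])

end Module.End

section powGeomSeq

variable {R : Type*} [CommRing R]

/-- The sequence `h_{j,w}` of the statement, reindexed to start at `0`. -/
def powGeomSeq (j : ℕ) (w : R) : ℕ → R := fun n => ((n : R) + 1) ^ j * w ^ (n + 1)

local notation "S" => LinearMap.funLeft R R Nat.succ

lemma shift_sub_smul_pow_apply (f : ℕ → R) (w : R) (m : ℕ) :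
    ((S - w • 1) ^ m) (fun n => f n * w ^ (n + 1)) =
      w ^ m • fun n => ((Δ_[1])^[m] f) n * w ^ (n + 1) := by
  induction m with
  | zero => simp
  | succ m ih =>
    rw [pow_succ', Module.End.mul_apply, ih, map_smul, pow_succ, mul_smul]
    congr 1
    funext n
    simp only [LinearMap.sub_apply, LinearMap.smul_apply, Module.End.one_apply, Pi.sub_apply,
      LinearMap.funLeft_apply, Nat.succ_eq_add_one, Pi.smul_apply, smul_eq_mul,
      Function.iterate_succ_apply', fwdDiff, pow_succ]
    ring

lemma shift_sub_smul_pow_powGeomSeq (j : ℕ) (w : R) (m : ℕ) :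
    ((S - w • 1) ^ m) (powGeomSeq j w) =
      w ^ m • fun n : ℕ => ((Δ_[1])^[m] (fun r : R => r ^ j)) ((n : R) + 1) * w ^ (n + 1) := by
  have hcomp : (fun n : ℕ => ((n : R) + 1) ^ j) =
      (fun r : R => r ^ j) ∘ fun n : ℕ => (n : R) + 1 := rfl
  refine (shift_sub_smul_pow_apply (fun n : ℕ => ((n : R) + 1) ^ j) w m).trans ?_
  rw [hcomp, fwdDiff_iter_comp_of_map_add (h' := (1 : R)) (fun x => by push_cast; ring)]
  rfl

lemma powGeomSeq_mem_genEigenspace (j : ℕ) (w : R) :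
    powGeomSeq j w ∈ Module.End.genEigenspace S w (j + 1 : ℕ) := by
  rw [Module.End.mem_genEigenspace_nat, LinearMap.mem_ker, shift_sub_smul_pow_powGeomSeq,
    fwdDiff_iter_pow_eq_zero_of_lt j.lt_succ_self]
  ext n
  simp

lemma powGeomSeq_notMem_genEigenspace [IsDomain R] [CharZero R] (j : ℕ) {w : R} (hw : w ≠ 0) :
    powGeomSeq j w ∉ Module.End.genEigenspace S w j := by
  rw [Module.End.mem_genEigenspace_nat, LinearMap.mem_ker, shift_sub_smul_pow_powGeomSeq,
    fwdDiff_iter_eq_factorial]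
  intro h
  have := congrFun h 0
  simp [hw, Nat.factorial_ne_zero] at this

lemma powGeomSeq_notMem_span [IsDomain R] [CharZero R] (k : ℕ) {w : R} (hw : w ≠ 0) :
    powGeomSeq (k + 1) w ∉ Submodule.span R {s | ∃ v : R, ∃ j ≤ k, s = powGeomSeq j v} := by
  refine Module.End.notMem_span_of_genEigenspace S ?_
    (Module.End.genEigenspace_le_maximal _ _ _ (powGeomSeq_mem_genEigenspace _ w))
    (powGeomSeq_notMem_genEigenspace _ hw)
  rintro _ ⟨v, j, hj, rfl⟩
  by_cases hv : v = w
  · subst hv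
    exact Or.inl <| (Module.End.genEigenspace S v).monotone (by exact_mod_cast Nat.succ_le_succ hj)
      (powGeomSeq_mem_genEigenspace j v)
  · exact Or.inr ⟨v, hv,
      Module.End.genEigenspace_le_maximal _ _ _ (powGeomSeq_mem_genEigenspace j v)⟩

end powGeomSeq

lemma Fder_eq_powGeomSeq (j : ℕ) (z : ℂ) : Fder j z = powGeomSeq j (Complex.exp z) := by
  funext n
  rw [Fder, powGeomSeq, ← Complex.exp_nat_mul]
  push_cast
  ring_nf

lemma Fder_succ_notMem_span (k : ℕ) (U : Set ℂ) (z : ℂ) :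
    Fder (k + 1) z ∉ Submodule.span ℂ {s | ∃ z ∈ U, ∃ j ≤ k, s = Fder j z} := fun h =>
  powGeomSeq_notMem_span k (Complex.exp_ne_zero z) <| by
    refine Fder_eq_powGeomSeq (k + 1) z ▸ Submodule.span_mono ?_ h
    rintro _ ⟨z', -, j, hj, rfl⟩
    exact ⟨_, j, hj, Fder_eq_powGeomSeq j z'⟩

lemma hasDerivAt_Fder_apply (j : ℕ) (z : ℂ) (n : ℕ) :
    HasDerivAt (fun w => Fder j w n) (Fder (j + 1) z n) z := by
  have h := (((hasDerivAt_id z).const_mul ((n : ℂ) + 1)).cexp).const_mul (((n : ℂ) + 1) ^ j)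
  exact h.congr_deriv (by simp only [Fder, id]; ring)

lemma continuous_Fder (j : ℕ) : Continuous (Fder j) :=
  continuous_pi fun n =>
    continuous_iff_continuousAt.2 fun z => (hasDerivAt_Fder_apply j z n).continuousAt

lemma tendsto_slope_Fder (j : ℕ) (z : ℂ) :
    Tendsto (fun w : ℂ => (w - z)⁻¹ • (Fder j w - Fder j z)) (𝓝[≠] z)
      (𝓝 (Fder (j + 1) z)) :=
  tendsto_pi_nhds.2 fun n => (hasDerivAt_Fder_apply j z n).tendsto_slope.congr fun w => by
    simp [slope_def_field, div_eq_inv_mul]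

theorem fk_Ck_not_Ck1_general (k : ℕ) (U : Set ℂ) (hU : IsOpen U)
    (Ek : Submodule ℂ (ℕ → ℂ))
    (hEk : Ek = Submodule.span ℂ
      {s : ℕ → ℂ | ∃ z ∈ U, ∃ j ≤ k, s = Fder j z}) :
    (∀ j ≤ k, ∀ z ∈ U, Fder j z ∈ Ek) ∧
    (∀ j ≤ k, ContinuousOn (Fder j) U) ∧
    (∀ j < k, ∀ z ∈ U,
      Tendsto (fun w : ℂ => (w - z)⁻¹ • (Fder j w - Fder j z))
        (nhdsWithin z (U \ {z})) (nhds (Fder (j + 1) z))) ∧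
    ∀ z ∈ U,
      Fder (k + 1) z ∉ Ek ∧
      ¬ ∃ L ∈ Ek, Tendsto (fun w : ℂ => (w - z)⁻¹ • (Fder k w - Fder k z))
        (nhdsWithin z (U \ {z})) (nhds L) := by
  subst hEk
  have hfilter : ∀ z ∈ U, 𝓝[U \ {z}] z = 𝓝[≠] z := fun z hz => by
    rw [Set.sdiff_eq, Set.inter_comm]
    exact nhdsWithin_inter_of_mem' (mem_nhdsWithin_of_mem_nhds (hU.mem_nhds hz))
  refine ⟨fun j hj z hz => Submodule.subset_span ⟨z, hz, j, hj, rfl⟩,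
    fun j _ => (continuous_Fder j).continuousOn,
    fun j _ z hz => hfilter z hz ▸ tendsto_slope_Fder j z,
    fun z hz => ⟨Fder_succ_notMem_span k U z, ?_⟩⟩
  rintro ⟨L, hL, hlim⟩
  rw [hfilter z hz] at hlim
  exact Fder_succ_notMem_span k U z (tendsto_nhds_unique hlim (tendsto_slope_Fder k z) ▸ hL)

/-- Let `k ≥ 1`, `U ⊆ ℂ` open non-empty, and let `E_k ⊆ ℂ^ℕ` be the span of the
sequences `(n^j wⁿ)ₙ` for `w ∈ e^U`, `0 ≤ j ≤ k`, with the topology induced by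
the product `ℂ^ℕ`. Then `f_k(z) = (e^{nz})ₙ` is `k` times continuously complex
differentiable into `E_k` with `f_k^{(j)}(z) = (n^j e^{nz})ₙ` for `j ≤ k`: all
these derivatives lie in `E_k`, are continuous on `U`, and are obtained as limits
of difference quotients. But `f_k` is not `(k+1)` times complex differentiable:
`(n^{k+1} e^{nz})ₙ ∉ E_k`, and (since `E_k` carries the induced topology) the
difference quotients of `f_k^{(k)}` have no limit in `E_k`. -/
theorem fk_Ck_not_Ck1 (k : ℕ) (hk : 1 ≤ k) (U : Set ℂ) (hU : IsOpen U)
    (hne : U.Nonempty) (Ek : Submodule ℂ (ℕ → ℂ))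
    (hEk : Ek = Submodule.span ℂ
      {s : ℕ → ℂ | ∃ z ∈ U, ∃ j ≤ k, s = Fder j z}) :
    (∀ j ≤ k, ∀ z ∈ U, Fder j z ∈ Ek) ∧
    (∀ j ≤ k, ContinuousOn (Fder j) U) ∧
    (∀ j < k, ∀ z ∈ U,
      Tendsto (fun w : ℂ => (w - z)⁻¹ • (Fder j w - Fder j z))
        (nhdsWithin z (U \ {z})) (nhds (Fder (j + 1) z))) ∧
    ∀ z ∈ U,
      Fder (k + 1) z ∉ Ek ∧
      ¬ ∃ L ∈ Ek, Tendsto (fun w : ℂ => (w - z)⁻¹ • (Fder k w - Fder k z))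
        (nhdsWithin z (U \ {z})) (nhds L) :=
  fk_Ck_not_Ck1_general k U hU Ek hEk
end
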